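/- Let U ⊆ ℂ be an open, simply connected set, let γ : [0,1] → ℂ be a closed piecewise continuously differentiable curve whose image is contained in U, and let z₁,…,z_l ∈ U be distinct points not on the image of γ. Let g be holomorphic on U \ {z₁,…,z_l}, and suppose g is meromorphic on U with essential part R_i(z) = Σ_{j=1}^{k_i} α_{i,j}/(z − z_i)^j at z_i, i.e. for each i the function z ↦ g(z) − R_i(z) extends holomorphically to a neighborhood of z_i. Then for every t ∈ U lying neither on the image of γ nor in {z₁,…,z_l}: I(γ,g,t) = μ(γ,t) g(t) − Σ_{i=1}^l μ(γ,z_i) R_i(t). -/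

import Mathlib

open MeasureTheory Set

/-- A curve `γ : ℝ → ℂ` (considered on `[0,1]`) is piecewise continuously differentiable
with (piecewise) derivative `γ'`. -/
def PiecewiseC1 (γ γ' : ℝ → ℂ) : Prop :=
  ContinuousOn γ (Set.Icc 0 1) ∧
  IntervalIntegrable γ' MeasureTheory.volume 0 1 ∧
  ∃ S : Finset ℝ,
    (∀ s ∈ Set.Icc (0:ℝ) 1 \ S, HasDerivWithinAt γ (γ' s) (Set.Icc 0 1) s) ∧
    ContinuousOn γ' (Set.Icc (0:ℝ) 1 \ S)

/-- The winding number of a closed curve `γ` around a point `w` not on its image. -/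
noncomputable def windingNumber (γ γ' : ℝ → ℂ) (w : ℂ) : ℂ :=
  (1 / (2 * Real.pi * Complex.I)) * ∫ s in (0:ℝ)..1, γ' s / (γ s - w)

/-- The Cauchy type integral `I(γ,g,t)`. -/
noncomputable def cauchyTypeIntegral (γ γ' : ℝ → ℂ) (g : ℂ → ℂ) (t : ℂ) : ℂ :=
  (1 / (2 * Real.pi * Complex.I)) * ∫ s in (0:ℝ)..1, g (γ s) * γ' s / (γ s - t)

open Metric Filter Topology

/-!
Subtracting the principal parts, `G = g - ∑ Rᵢ` extends holomorphically to `U`, and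
`G w / (w - t) = dslope G t w + G t / (w - t)`. Cauchy's theorem on the simply connected `U`
kills the integral of the difference quotient, leaving `μ(γ,t) G(t)`. For a principal part,
`(w - z)^(-(j+1)) / (w - t)` splits as `(t - z)^(-(j+1)) ((w - t)⁻¹ - (w - z)⁻¹)` plus higher
powers of `(w - z)⁻¹`, which have primitives off `z`.

Cauchy's theorem itself comes from contracting `γ` inside `U`: with primitives of `f` on balls
of a fixed radius around the compact image of the homotopy, the sum of primitive differences
along a fine partition of each intermediate loop is locally constant in the homotopy parameter;
it equals the integral along `γ` and vanishes for the constant loop.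
-/

noncomputable def contourIntegral (γ γ' : ℝ → ℂ) (f : ℂ → ℂ) : ℂ :=
  ∫ s in (0:ℝ)..1, f (γ s) * γ' s

lemma windingNumber_eq_contourIntegral (γ γ' : ℝ → ℂ) (w : ℂ) :
    windingNumber γ γ' w =
      1 / (2 * Real.pi * Complex.I) * contourIntegral γ γ' (fun u => (u - w)⁻¹) := by
  simp only [windingNumber, contourIntegral, inv_mul_eq_div]

lemma cauchyTypeIntegral_eq_contourIntegral (γ γ' : ℝ → ℂ) (g : ℂ → ℂ) (t : ℂ) :
    cauchyTypeIntegral γ γ' g t =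
      1 / (2 * Real.pi * Complex.I) * contourIntegral γ γ' (fun w => g w / (w - t)) := by
  simp only [cauchyTypeIntegral, contourIntegral, div_mul_eq_mul_div]

lemma contourIntegral_const_mul (γ γ' : ℝ → ℂ) (c : ℂ) (f : ℂ → ℂ) :
    contourIntegral γ γ' (fun w => c * f w) = c * contourIntegral γ γ' f := by
  simp only [contourIntegral, mul_assoc, intervalIntegral.integral_const_mul]

lemma contourIntegral_congr {γ γ' : ℝ → ℂ} {f g : ℂ → ℂ}
    (h : EqOn f g (γ '' Icc 0 1)) : contourIntegral γ γ' f = contourIntegral γ γ' g := by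
  refine intervalIntegral.integral_congr fun s hs => ?_
  rw [uIcc_of_le zero_le_one] at hs
  simp only [h (mem_image_of_mem γ hs)]

lemma cauchyTypeIntegral_const_mul (γ γ' : ℝ → ℂ) (c : ℂ) (g : ℂ → ℂ) (t : ℂ) :
    cauchyTypeIntegral γ γ' (fun w => c * g w) t = c * cauchyTypeIntegral γ γ' g t := by
  simp only [cauchyTypeIntegral_eq_contourIntegral, mul_div_assoc, contourIntegral_const_mul]
  ring

lemma cauchyTypeIntegral_congr {γ γ' : ℝ → ℂ} {g₁ g₂ : ℂ → ℂ}
    (h : EqOn g₁ g₂ (γ '' Icc 0 1)) (t : ℂ) :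
    cauchyTypeIntegral γ γ' g₁ t = cauchyTypeIntegral γ γ' g₂ t := by
  rw [cauchyTypeIntegral_eq_contourIntegral, cauchyTypeIntegral_eq_contourIntegral]
  congr 1
  exact contourIntegral_congr fun w hw => by simp only [h hw]

lemma continuousOn_inv_pow_sub {s : Set ℂ} {z : ℂ} (hz : z ∉ s) (n : ℕ) :
    ContinuousOn (fun w => ((w - z) ^ n)⁻¹) s :=
  ((continuous_id.sub continuous_const).pow n).continuousOn.inv₀
    fun _ hw => pow_ne_zero n (sub_ne_zero.2 (ne_of_mem_of_not_mem hw hz))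

lemma ContinuousOn.div_sub_of_notMem {s : Set ℂ} {f : ℂ → ℂ} (hf : ContinuousOn f s)
    {t : ℂ} (ht : t ∉ s) : ContinuousOn (fun w => f w / (w - t)) s :=
  hf.div (continuousOn_id.sub continuousOn_const) fun _ hw =>
    sub_ne_zero.2 (ne_of_mem_of_not_mem hw ht)

namespace PiecewiseC1

variable {γ γ' : ℝ → ℂ} {f g : ℂ → ℂ}

lemma intervalIntegrable_comp_mul (hγ : PiecewiseC1 γ γ')
    (hf : ContinuousOn f (γ '' Icc 0 1)) :
    IntervalIntegrable (fun s => f (γ s) * γ' s) volume 0 1 :=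
  hγ.2.1.continuousOn_mul <| by
    rw [uIcc_of_le zero_le_one]
    exact hf.comp hγ.1 (mapsTo_image γ _)

lemma contourIntegral_add (hγ : PiecewiseC1 γ γ') (hf : ContinuousOn f (γ '' Icc 0 1))
    (hg : ContinuousOn g (γ '' Icc 0 1)) :
    contourIntegral γ γ' (fun w => f w + g w) =
      contourIntegral γ γ' f + contourIntegral γ γ' g := by
  simp only [contourIntegral, add_mul]
  exact intervalIntegral.integral_add (hγ.intervalIntegrable_comp_mul hf)
    (hγ.intervalIntegrable_comp_mul hg)

lemma contourIntegral_sub (hγ : PiecewiseC1 γ γ') (hf : ContinuousOn f (γ '' Icc 0 1))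
    (hg : ContinuousOn g (γ '' Icc 0 1)) :
    contourIntegral γ γ' (fun w => f w - g w) =
      contourIntegral γ γ' f - contourIntegral γ γ' g := by
  simp only [contourIntegral, sub_mul]
  exact intervalIntegral.integral_sub (hγ.intervalIntegrable_comp_mul hf)
    (hγ.intervalIntegrable_comp_mul hg)

lemma contourIntegral_finsetSum {ι : Type*} (hγ : PiecewiseC1 γ γ') (s : Finset ι)
    {F : ι → ℂ → ℂ} (hF : ∀ i ∈ s, ContinuousOn (F i) (γ '' Icc 0 1)) :
    contourIntegral γ γ' (fun w => ∑ i ∈ s, F i w) = ∑ i ∈ s, contourIntegral γ γ' (F i) := by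
  simp only [contourIntegral, Finset.sum_mul]
  exact intervalIntegral.integral_finsetSum fun i hi => hγ.intervalIntegrable_comp_mul (hF i hi)

lemma cauchyTypeIntegral_add (hγ : PiecewiseC1 γ γ') {t : ℂ} (ht : t ∉ γ '' Icc 0 1)
    (hf : ContinuousOn f (γ '' Icc 0 1)) (hg : ContinuousOn g (γ '' Icc 0 1)) :
    cauchyTypeIntegral γ γ' (fun w => f w + g w) t =
      cauchyTypeIntegral γ γ' f t + cauchyTypeIntegral γ γ' g t := by
  simp only [cauchyTypeIntegral_eq_contourIntegral, add_div]
  rw [hγ.contourIntegral_add (hf.div_sub_of_notMem ht) (hg.div_sub_of_notMem ht), mul_add]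

lemma cauchyTypeIntegral_finsetSum {ι : Type*} (hγ : PiecewiseC1 γ γ') {t : ℂ}
    (ht : t ∉ γ '' Icc 0 1) (s : Finset ι) {F : ι → ℂ → ℂ}
    (hF : ∀ i ∈ s, ContinuousOn (F i) (γ '' Icc 0 1)) :
    cauchyTypeIntegral γ γ' (fun w => ∑ i ∈ s, F i w) t =
      ∑ i ∈ s, cauchyTypeIntegral γ γ' (F i) t := by
  simp only [cauchyTypeIntegral_eq_contourIntegral, Finset.sum_div]
  rw [hγ.contourIntegral_finsetSum s fun i hi => (hF i hi).div_sub_of_notMem ht, Finset.mul_sum]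

lemma integral_eq_sub_of_hasDerivAt (hγ : PiecewiseC1 γ γ') {a b : ℝ} (ha : 0 ≤ a)
    (hab : a ≤ b) (hb : b ≤ 1) {F : ℂ → ℂ}
    (hF : ∀ s ∈ Icc a b, HasDerivAt F (f (γ s)) (γ s))
    (hint : IntervalIntegrable (fun s => f (γ s) * γ' s) volume a b) :
    ∫ s in a..b, f (γ s) * γ' s = F (γ b) - F (γ a) := by
  obtain ⟨hγc, -, S, hγd, -⟩ := hγ
  refine integral_eq_of_hasDerivAt_off_countable_of_le (F ∘ γ) _ hab S.countable_toSet
    (fun s hs => (hF s hs).continuousAt.comp_continuousWithinAt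
      (hγc.mono (Icc_subset_Icc ha hb) s hs)) (fun s ⟨hs, hsS⟩ => ?_) hint
  have hs01 : s ∈ Ioo (0:ℝ) 1 := ⟨ha.trans_lt hs.1, hs.2.trans_le hb⟩
  exact (hF s (Ioo_subset_Icc_self hs)).comp s
    ((hγd s ⟨Ioo_subset_Icc_self hs01, hsS⟩).hasDerivAt (Icc_mem_nhds hs01.1 hs01.2))

lemma contourIntegral_eq_zero_of_hasDerivAt (hγ : PiecewiseC1 γ γ') (hclosed : γ 0 = γ 1)
    (hf : ContinuousOn f (γ '' Icc 0 1)) {V : Set ℂ} {F : ℂ → ℂ}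
    (hF : ∀ w ∈ V, HasDerivAt F (f w) w) (himage : γ '' Icc 0 1 ⊆ V) :
    contourIntegral γ γ' f = 0 := by
  rw [contourIntegral, hγ.integral_eq_sub_of_hasDerivAt le_rfl zero_le_one le_rfl
    (fun s hs => hF _ (himage (mem_image_of_mem γ hs))) (hγ.intervalIntegrable_comp_mul hf),
    hclosed, sub_self]

lemma contourIntegral_zpow_sub_eq_zero (hγ : PiecewiseC1 γ γ') (hclosed : γ 0 = γ 1) {z : ℂ}
    (hz : z ∉ γ '' Icc 0 1) {n : ℤ} (hn : n ≠ -1) :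
    contourIntegral γ γ' (fun w => (w - z) ^ n) = 0 := by
  have hn' : (n : ℂ) + 1 ≠ 0 := by exact_mod_cast (show n + 1 ≠ 0 by omega)
  have hzγ : γ '' Icc 0 1 ⊆ {z}ᶜ := fun w hw hwz => hz (by rwa [← mem_singleton_iff.1 hwz])
  refine hγ.contourIntegral_eq_zero_of_hasDerivAt hclosed
    ((continuous_id.sub continuous_const).continuousOn.zpow₀ n fun w hw =>
      Or.inl (sub_ne_zero.2 fun h => hzγ hw h))
    (F := fun w => (w - z) ^ (n + 1) / (n + 1)) (fun w hw => ?_) hzγ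
  have h := ((hasDerivAt_zpow (n + 1) (w - z) (Or.inl (sub_ne_zero.2 hw))).comp w
    ((hasDerivAt_id w).sub_const z)).div_const ((n : ℂ) + 1)
  refine h.congr_deriv ?_
  rw [add_sub_cancel_right, Int.cast_add, Int.cast_one]
  field_simp

end PiecewiseC1

lemma inv_pow_succ_div_sub {K : Type*} [Field K] {u v : K} (hu : u ≠ 0) (hv : v ≠ 0)
    (huv : u - v ≠ 0) (j : ℕ) :
    (u ^ (j + 1))⁻¹ / (u - v) = (v ^ (j + 1))⁻¹ * ((u - v)⁻¹ - u⁻¹)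
      - ∑ m ∈ Finset.range j, (v ^ (j - m))⁻¹ * (u ^ (m + 2))⁻¹ := by
  have base : u⁻¹ / (u - v) = v⁻¹ * ((u - v)⁻¹ - u⁻¹) := by
    field_simp
    ring
  induction j with
  | zero => simpa using base
  | succ j ih =>
    have hsum : u⁻¹ * ∑ m ∈ Finset.range j, (v ^ (j - m))⁻¹ * (u ^ (m + 2))⁻¹ =
        ∑ m ∈ Finset.range j, (v ^ (j + 1 - (m + 1)))⁻¹ * (u ^ (m + 1 + 2))⁻¹ := by
      rw [Finset.mul_sum]
      refine Finset.sum_congr rfl fun m _ => ?_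
      rw [Nat.add_sub_add_right]
      ring
    calc (u ^ (j + 1 + 1))⁻¹ / (u - v) = u⁻¹ * ((u ^ (j + 1))⁻¹ / (u - v)) := by ring
      _ = _ := by
        rw [ih, Finset.sum_range_succ', ← hsum, Nat.sub_zero]
        linear_combination (v ^ (j + 1))⁻¹ * base

namespace PiecewiseC1

variable {γ γ' : ℝ → ℂ}

lemma cauchyTypeIntegral_inv_pow_sub (hγ : PiecewiseC1 γ γ') (hclosed : γ 0 = γ 1) {z t : ℂ}
    (hz : z ∉ γ '' Icc 0 1) (ht : t ∉ γ '' Icc 0 1) (htz : t ≠ z) (j : ℕ) :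
    cauchyTypeIntegral γ γ' (fun w => ((w - z) ^ (j + 1))⁻¹) t =
      (windingNumber γ γ' t - windingNumber γ γ' z) * ((t - z) ^ (j + 1))⁻¹ := by
  set c := ((t - z) ^ (j + 1))⁻¹
  have hct : ContinuousOn (fun w => c * (w - t)⁻¹) (γ '' Icc 0 1) :=
    continuousOn_const.mul (by simpa using continuousOn_inv_pow_sub ht 1)
  have hcz : ContinuousOn (fun w => c * (w - z)⁻¹) (γ '' Icc 0 1) :=
    continuousOn_const.mul (by simpa using continuousOn_inv_pow_sub hz 1)
  have hsplit : EqOn (fun w => ((w - z) ^ (j + 1))⁻¹ / (w - t))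
      (fun w => c * (w - t)⁻¹ - c * (w - z)⁻¹
        - ∑ m ∈ Finset.range j, ((t - z) ^ (j - m))⁻¹ * ((w - z) ^ (m + 2))⁻¹)
      (γ '' Icc 0 1) := by
    intro w hw
    have h := inv_pow_succ_div_sub (sub_ne_zero.2 (ne_of_mem_of_not_mem hw hz))
      (sub_ne_zero.2 htz)
      (by rw [sub_sub_sub_cancel_right]; exact sub_ne_zero.2 (ne_of_mem_of_not_mem hw ht)) j
    rw [sub_sub_sub_cancel_right] at h
    simp only [h]
    ring
  have hvanish : ∀ m : ℕ, contourIntegral γ γ' (fun w => ((w - z) ^ (m + 2))⁻¹) = 0 := fun m => by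
    simpa only [zpow_neg, zpow_natCast] using
      hγ.contourIntegral_zpow_sub_eq_zero hclosed hz (n := -((m + 2 : ℕ) : ℤ)) (by omega)
  rw [cauchyTypeIntegral_eq_contourIntegral, windingNumber_eq_contourIntegral,
    windingNumber_eq_contourIntegral, contourIntegral_congr hsplit,
    hγ.contourIntegral_sub ?diff ?sum, hγ.contourIntegral_sub hct hcz,
    hγ.contourIntegral_finsetSum _ ?terms]
  case diff => exact hct.sub hcz
  case terms => exact fun m _ => continuousOn_const.mul (continuousOn_inv_pow_sub hz _)
  case sum => exact continuousOn_finsetSum _ fun m _ =>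
    continuousOn_const.mul (continuousOn_inv_pow_sub hz _)
  simp only [contourIntegral_const_mul, hvanish, mul_zero, Finset.sum_const_zero]
  ring

lemma cauchyTypeIntegral_principalPart (hγ : PiecewiseC1 γ γ') (hclosed : γ 0 = γ 1) {z t : ℂ}
    (hz : z ∉ γ '' Icc 0 1) (ht : t ∉ γ '' Icc 0 1) (htz : t ≠ z) (k : ℕ) (α : ℕ → ℂ) :
    cauchyTypeIntegral γ γ' (fun w => ∑ j ∈ Finset.Icc 1 k, α j / (w - z) ^ j) t =
      (windingNumber γ γ' t - windingNumber γ γ' z) * ∑ j ∈ Finset.Icc 1 k, α j / (t - z) ^ j := by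
  simp only [div_eq_mul_inv]
  rw [hγ.cauchyTypeIntegral_finsetSum ht _ ?cont, Finset.mul_sum]
  case cont => exact fun j _ => continuousOn_const.mul (continuousOn_inv_pow_sub hz j)
  refine Finset.sum_congr rfl fun j hj => ?_
  obtain ⟨n, rfl⟩ := Nat.exists_eq_add_of_le' (Finset.mem_Icc.1 hj).1
  rw [cauchyTypeIntegral_const_mul, hγ.cauchyTypeIntegral_inv_pow_sub hclosed hz ht htz]
  ring

end PiecewiseC1

lemma IsOpen.sub_eq_sub_of_hasDerivAt {𝕜 G : Type*} [RCLike 𝕜] [NormedAddCommGroup G]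
    [NormedSpace 𝕜 G] {s : Set 𝕜} (hs : IsOpen s) (hs' : IsPreconnected s) {f F₁ F₂ : 𝕜 → G}
    (hF₁ : ∀ w ∈ s, HasDerivAt F₁ (f w) w) (hF₂ : ∀ w ∈ s, HasDerivAt F₂ (f w) w) {x y : 𝕜}
    (hx : x ∈ s) (hy : y ∈ s) : F₁ x - F₂ x = F₁ y - F₂ y := by
  have hd : ∀ w ∈ s, HasDerivAt (F₁ - F₂) 0 w := fun w hw => by
    simpa only [sub_self] using (hF₁ w hw).sub (hF₂ w hw)
  exact hs.is_const_of_deriv_eq_zero hs'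
    (fun w hw => (hd w hw).differentiableAt.differentiableWithinAt) (fun w hw => (hd w hw).deriv)
    hx hy

/-- If `Φ c` is a primitive of `f` near `c`, `chainSum Φ a N` is the integral of `f` along the
polygonal chain `a 0, …, a N`, computed with these local primitives. -/
def chainSum (Φ : ℂ → ℂ → ℂ) (a : ℕ → ℂ) (N : ℕ) : ℂ :=
  ∑ i ∈ Finset.range N, (Φ (a i) (a (i + 1)) - Φ (a i) (a i))

lemma chainSum_eq_of_forall_subset_ball {f : ℂ → ℂ} {e : ℝ} {S : Set ℂ} {Φ : ℂ → ℂ → ℂ}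
    (hΦ : ∀ c ∈ S, ∀ w ∈ ball c e, HasDerivAt (Φ c) (f w) w) {a b : ℕ → ℂ} {N : ℕ}
    (ha : ∀ i, a i ∈ S) (hb : ∀ i, b i ∈ S)
    (hcell : ∀ i < N, ∃ c, ({a i, a (i + 1), b i, b (i + 1)} : Set ℂ) ⊆ ball c (e / 2))
    (h0 : a 0 = b 0) (hN : a N = b N) : chainSum Φ a N = chainSum Φ b N := by
  have hprim : ∀ c ∈ S, ∀ c' ∈ S, ∀ x ∈ ball c e ∩ ball c' e, ∀ y ∈ ball c e ∩ ball c' e,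
      Φ c x - Φ c' x = Φ c y - Φ c' y := fun _ hc _ hc' _ hx _ hy =>
    (isOpen_ball.inter isOpen_ball).sub_eq_sub_of_hasDerivAt
      ((convex_ball _ _).inter (convex_ball _ _)).isPreconnected
      (fun w hw => hΦ _ hc w hw.1) (fun w hw => hΦ _ hc' w hw.2) hx hy
  set ψ : ℕ → ℂ := fun i => Φ (b i) (a i) - Φ (b i) (b i)
  have hstep : ∀ i < N, (Φ (a i) (a (i + 1)) - Φ (a i) (a i)) -
      (Φ (b i) (b (i + 1)) - Φ (b i) (b i)) = ψ (i + 1) - ψ i := by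
    intro i hi
    obtain ⟨c, hc⟩ := hcell i hi
    have near : ∀ {x y}, x ∈ ({a i, a (i + 1), b i, b (i + 1)} : Set ℂ) →
        y ∈ ({a i, a (i + 1), b i, b (i + 1)} : Set ℂ) → x ∈ ball y e := fun {x y} hx hy => by
      have hx := mem_ball.1 (hc hx)
      have hy := mem_ball.1 (hc hy)
      exact mem_ball.2 (by linarith [dist_triangle_right x y c])
    have h1 := hprim _ (ha i) _ (hb i) (a (i + 1))
      ⟨near (by simp) (by simp), near (by simp) (by simp)⟩ (a i)
      ⟨near (by simp) (by simp), near (by simp) (by simp)⟩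
    have h2 := hprim _ (hb i) _ (hb (i + 1)) (a (i + 1))
      ⟨near (by simp) (by simp), near (by simp) (by simp)⟩ (b (i + 1))
      ⟨near (by simp) (by simp), near (by simp) (by simp)⟩
    simp only [ψ]
    linear_combination h1 + h2
  rw [← sub_eq_zero, chainSum, chainSum, ← Finset.sum_sub_distrib,
    Finset.sum_congr rfl fun i hi => hstep i (Finset.mem_range.1 hi), Finset.sum_range_sub]
  simp [ψ, h0, hN]

lemma dist_le_one_div_of_mem_Icc {N i : ℕ} {s : ℝ}
    (hs : s ∈ Icc ((i : ℝ) / N) ((i + 1 : ℕ) / N)) : dist s (i / N) ≤ 1 / N :=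
  (Real.dist_le_of_mem_Icc hs (left_mem_Icc.2 (hs.1.trans hs.2))).trans_eq (by push_cast; ring)

lemma chainSum_eq_of_homotopy {f : ℂ → ℂ} {e δ : ℝ} {K : ℝ × ℝ → ℂ} {Φ : ℂ → ℂ → ℂ}
    (hΦ : ∀ c ∈ range K, ∀ w ∈ ball c e, HasDerivAt (Φ c) (f w) w)
    (hKδ : ∀ ⦃p q⦄, dist p q < δ → dist (K p) (K q) < e / 2) {N : ℕ} (hN0 : N ≠ 0)
    (hN : 1 / (N : ℝ) < δ) (hends : ∀ τ, K (τ, 0) = K (0, 0) ∧ K (τ, 1) = K (0, 1)) :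
    chainSum Φ (fun i => K (0, i / N)) N = chainSum Φ (fun i => K (1, i / N)) N := by
  have hδ : 0 < δ := lt_of_le_of_lt (by positivity) hN
  have hδ' : ∀ x : ℝ, dist x x < δ := fun x => by simpa using hδ
  have hK : ∀ {τ τ' s s'}, dist τ τ' < δ → dist s s' < δ →
      K (τ, s) ∈ ball (K (τ', s')) (e / 2) :=
    fun h₁ h₂ => hKδ (by rw [Prod.dist_eq]; exact max_lt h₁ h₂)
  let W : ℝ → ℂ := fun τ => chainSum Φ (fun i => K (τ, i / N)) N
  have hW : IsLocallyConstant W := by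
    refine (IsLocallyConstant.iff_eventually_eq W).2 fun τ => ?_
    filter_upwards [ball_mem_nhds τ hδ] with τ' hτ'
    refine chainSum_eq_of_forall_subset_ball hΦ (fun i => mem_range_self _)
      (fun i => mem_range_self _) (fun i _ => ⟨K (τ, i / N), ?_⟩) ?_ ?_
    · have hi := (dist_le_one_div_of_mem_Icc (s := (i + 1 : ℕ) / N)
        ⟨by gcongr; simp, le_rfl⟩).trans_lt hN
      simp only [insert_subset_iff, singleton_subset_iff]
      exact ⟨hK hτ' (hδ' _), hK hτ' hi, hK (hδ' _) (hδ' _), hK (hδ' _) hi⟩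
    · simp [hends]
    · simp [div_self (Nat.cast_ne_zero.2 hN0 : (N : ℝ) ≠ 0), hends]
  exact hW.apply_eq_of_preconnectedSpace 0 1

lemma exists_contraction_of_simplyConnected {U : Set ℂ} [SimplyConnectedSpace U] {γ : ℝ → ℂ}
    (hγ : ContinuousOn γ (Icc 0 1)) (hclosed : γ 0 = γ 1) (himage : γ '' Icc 0 1 ⊆ U) :
    ∃ K : ℝ × ℝ → ℂ, UniformContinuous K ∧ IsCompact (range K) ∧ range K ⊆ U ∧
      (∀ s ∈ Icc (0 : ℝ) 1, K (0, s) = γ s) ∧ (∀ s, K (1, s) = γ 0) ∧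
      ∀ τ, K (τ, 0) = γ 0 ∧ K (τ, 1) = γ 0 := by
  set x₀ : U := ⟨γ 0, himage (mem_image_of_mem γ (left_mem_Icc.2 zero_le_one))⟩
  let P : Path x₀ x₀ :=
    { toFun := fun s => ⟨γ s, himage (mem_image_of_mem γ s.2)⟩
      continuous_toFun := hγ.domRestrict.subtype_mk _
      source' := rfl
      target' := Subtype.ext hclosed.symm }
  obtain ⟨H⟩ := SimplyConnectedSpace.paths_homotopic P (Path.refl x₀)
  let proj : ℝ → unitInterval := projIcc 0 1 zero_le_one
  have hH : UniformContinuous fun q => (H q : ℂ) :=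
    CompactSpace.uniformContinuous_of_continuous (continuous_subtype_val.comp H.continuous)
  have hproj : (Prod.map proj proj).Surjective :=
    (projIcc_surjective _).prodMap (projIcc_surjective _)
  have hproj_uc : UniformContinuous (Prod.map proj proj) :=
    (LipschitzWith.projIcc _).uniformContinuous.prodMap (LipschitzWith.projIcc _).uniformContinuous
  refine ⟨(fun q => (H q : ℂ)) ∘ Prod.map proj proj, hH.comp hproj_uc, ?_, ?_, fun s hs => ?_,
    fun s => ?_, fun τ => ⟨?_, ?_⟩⟩
  · rw [hproj.range_comp]
    exact isCompact_range hH.continuous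
  · rw [hproj.range_comp]
    exact range_subset_iff.2 fun q => (H q).2
  · simp [proj, projIcc_of_mem _ hs, P]
    rfl
  all_goals simp [proj, x₀]

namespace PiecewiseC1

variable {γ γ' : ℝ → ℂ} {f : ℂ → ℂ}

lemma contourIntegral_eq_chainSum (hγ : PiecewiseC1 γ γ') (hf : ContinuousOn f (γ '' Icc 0 1))
    {N : ℕ} (hN : N ≠ 0) {a : ℕ → ℂ} (ha : ∀ i ≤ N, a i = γ (i / N)) {Φ : ℂ → ℂ → ℂ}
    (hΦ : ∀ i < N, ∀ s ∈ Icc ((i : ℝ) / N) ((i + 1 : ℕ) / N),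
      HasDerivAt (Φ (a i)) (f (γ s)) (γ s)) :
    contourIntegral γ γ' f = chainSum Φ a N := by
  have hNpos : (0 : ℝ) < N := Nat.cast_pos.2 (Nat.pos_of_ne_zero hN)
  have hmem : ∀ i ≤ N, (i : ℝ) / N ∈ Icc (0 : ℝ) 1 := fun i hi =>
    ⟨by positivity, (div_le_one hNpos).2 (by exact_mod_cast hi)⟩
  have hint := hγ.intervalIntegrable_comp_mul hf
  have hsub : ∀ i < N, Icc ((i : ℝ) / N) ((i + 1 : ℕ) / N) ⊆ Icc 0 1 := fun i hi =>
    Icc_subset_Icc (hmem i hi.le).1 (hmem (i + 1) hi).2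
  have hle : ∀ i : ℕ, (i : ℝ) / N ≤ (i + 1 : ℕ) / N := fun i => by gcongr; simp
  have hpiece : ∀ i < N, IntervalIntegrable (fun s => f (γ s) * γ' s) volume ((i : ℝ) / N)
      ((i + 1 : ℕ) / N) := fun i hi =>
    hint.mono_set (by rw [uIcc_of_le (hle i), uIcc_of_le zero_le_one]; exact hsub i hi)
  rw [contourIntegral, chainSum]
  have hends : ((0 : ℕ) : ℝ) / N = 0 ∧ (N : ℝ) / N = 1 := ⟨by simp, div_self hNpos.ne'⟩
  rw [← hends.1, ← hends.2, ← intervalIntegral.sum_integral_adjacent_intervals hpiece]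
  refine Finset.sum_congr rfl fun i hi => ?_
  have hi := Finset.mem_range.1 hi
  exact (hγ.integral_eq_sub_of_hasDerivAt (hmem i hi.le).1 (hle i) (hmem (i + 1) hi).2
    (hΦ i hi) (hpiece i hi)).trans (by rw [ha i hi.le, ha (i + 1) hi])

theorem contourIntegral_eq_zero_of_simplyConnected {U : Set ℂ} (hU : IsOpen U)
    [SimplyConnectedSpace U] (hγ : PiecewiseC1 γ γ') (hclosed : γ 0 = γ 1)
    (himage : γ '' Icc 0 1 ⊆ U) (hf : DifferentiableOn ℂ f U) : contourIntegral γ γ' f = 0 := by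
  obtain ⟨K, hKuc, hKcpt, hKU, hK_zero, hK_one, hK_ends⟩ :=
    exists_contraction_of_simplyConnected hγ.1 hclosed himage
  obtain ⟨e, he, hKe⟩ := hKcpt.exists_thickening_subset_open hU hKU
  have hprim : ∀ c ∈ range K, ∃ F : ℂ → ℂ, ∀ w ∈ ball c e, HasDerivAt F (f w) w := fun c hc =>
    (hf.mono ((ball_subset_thickening hc e).trans hKe)).isExactOn_ball
  choose! Φ hΦ using hprim
  obtain ⟨δ, hδ, hKδ⟩ := Metric.uniformContinuous_iff.1 hKuc (e / 2) (half_pos he)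
  obtain ⟨N, hN0, hN⟩ : ∃ N : ℕ, N ≠ 0 ∧ 1 / (N : ℝ) < δ := by
    obtain ⟨n, hn⟩ := exists_nat_one_div_lt hδ
    exact ⟨n + 1, n.succ_ne_zero, by exact_mod_cast hn⟩
  have hgrid : ∀ i ≤ N, (i : ℝ) / N ∈ Icc (0 : ℝ) 1 := fun i hi =>
    ⟨by positivity, div_le_one_of_le₀ (by exact_mod_cast hi) (Nat.cast_nonneg N)⟩
  calc contourIntegral γ γ' f = chainSum Φ (fun i => K (0, i / N)) N := by
        refine hγ.contourIntegral_eq_chainSum (hf.continuousOn.mono himage) hN0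
          (fun i hi => hK_zero _ (hgrid i hi)) fun i hi s hs => ?_
        rw [← hK_zero s ⟨(hgrid i hi.le).1.trans hs.1, hs.2.trans (hgrid _ hi).2⟩]
        refine hΦ _ (mem_range_self _) _ (ball_subset_ball (half_le_self he.le) (hKδ ?_))
        rw [Prod.dist_eq, dist_self]
        exact max_lt hδ ((dist_le_one_div_of_mem_Icc hs).trans_lt hN)
    _ = chainSum Φ (fun i => K (1, i / N)) N :=
        chainSum_eq_of_homotopy hΦ hKδ hN0 hN fun τ => by simp [hK_ends]
    _ = 0 := by simp [chainSum, hK_one]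

theorem cauchyTypeIntegral_eq_windingNumber_mul {U : Set ℂ}
    (hU : IsOpen U) [SimplyConnectedSpace U] (hγ : PiecewiseC1 γ γ') (hclosed : γ 0 = γ 1)
    (himage : γ '' Icc 0 1 ⊆ U) {G : ℂ → ℂ} (hG : DifferentiableOn ℂ G U) {t : ℂ} (htU : t ∈ U)
    (ht : t ∉ γ '' Icc 0 1) :
    cauchyTypeIntegral γ γ' G t = windingNumber γ γ' t * G t := by
  have hd : DifferentiableOn ℂ (dslope G t) U :=
    (Complex.differentiableOn_dslope (hU.mem_nhds htU)).2 hG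
  have hsplit : EqOn (fun w => G w / (w - t)) (fun w => dslope G t w + G t * (w - t)⁻¹)
      (γ '' Icc 0 1) := fun w hw => by
    have hwt : w - t ≠ 0 := sub_ne_zero.2 (ne_of_mem_of_not_mem hw ht)
    simp only [dslope_of_ne G (sub_ne_zero.1 hwt), slope_def_field]
    field_simp
    ring
  rw [cauchyTypeIntegral_eq_contourIntegral, windingNumber_eq_contourIntegral,
    contourIntegral_congr hsplit, hγ.contourIntegral_add ?dslope ?pole,
    hγ.contourIntegral_eq_zero_of_simplyConnected hU hclosed himage hd, contourIntegral_const_mul]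
  case dslope => exact hd.continuousOn.mono himage
  case pole => exact continuousOn_const.mul (by simpa using continuousOn_inv_pow_sub ht 1)
  ring

end PiecewiseC1

lemma exists_differentiableOn_eqOn_compl_of_finite {𝕜 E : Type*} [NontriviallyNormedField 𝕜]
    [NormedAddCommGroup E] [NormedSpace 𝕜 E] {U Z : Set 𝕜} (hU : IsOpen U) (hZ : Z.Finite)
    {f : 𝕜 → E} (hf : DifferentiableOn 𝕜 f (U \ Z))
    (hrem : ∀ z ∈ Z, ∃ h : 𝕜 → E, DifferentiableAt 𝕜 h z ∧ f =ᶠ[𝓝[≠] z] h) :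
    ∃ G : 𝕜 → E, DifferentiableOn 𝕜 G U ∧ EqOn G f Zᶜ := by
  classical
  choose! h hh hfh using hrem
  refine ⟨fun w => if w ∈ Z then h w w else f w, fun w hwU => ?_, fun w hw => if_neg hw⟩
  refine DifferentiableAt.differentiableWithinAt ?_
  by_cases hwZ : w ∈ Z
  · have hnear : (Z \ {w})ᶜ ∈ 𝓝 w :=
      (hZ.sdiff).isClosed.isOpen_compl.mem_nhds fun hw => hw.2 rfl
    refine (hh w hwZ).congr_of_eventuallyEq ?_
    filter_upwards [hnear, eventually_nhdsWithin_iff.1 (hfh w hwZ)] with y hy hfy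
    by_cases hyw : y = w
    · simp [hyw, hwZ]
    · simp [show y ∉ Z from fun hyZ => hy ⟨hyZ, hyw⟩, hfy hyw]
  · have hoff : U ∩ Zᶜ ∈ 𝓝 w := (hU.inter hZ.isClosed.isOpen_compl).mem_nhds ⟨hwU, hwZ⟩
    refine ((hf w ⟨hwU, hwZ⟩).differentiableAt hoff).congr_of_eventuallyEq ?_
    filter_upwards [hoff] with y hy
    simp [show y ∉ Z from hy.2]

lemma exists_differentiableOn_eqOn_sub_sum {ι : Type*} [Fintype ι] {U : Set ℂ} (hU : IsOpen U)
    {z : ι → ℂ} (hz : Function.Injective z) {R : ι → ℂ → ℂ}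
    (hR : ∀ i, ∀ w ≠ z i, DifferentiableAt ℂ (R i) w) {g : ℂ → ℂ}
    (hg : DifferentiableOn ℂ g (U \ range z))
    (hmero : ∀ i, ∃ V ∈ 𝓝 (z i), ∃ h : ℂ → ℂ, DifferentiableOn ℂ h V ∧
      ∀ w ∈ V \ {z i}, h w = g w - R i w) :
    ∃ G : ℂ → ℂ, DifferentiableOn ℂ G U ∧ EqOn G (fun w => g w - ∑ i, R i w) (range z)ᶜ := by
  classical
  refine exists_differentiableOn_eqOn_compl_of_finite hU (finite_range z)
    (hg.sub (DifferentiableOn.fun_sum fun i _ w hw =>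
      (hR i w fun h => hw.2 ⟨i, h.symm⟩).differentiableWithinAt)) ?_
  rintro _ ⟨i, rfl⟩
  obtain ⟨V, hV, h, hh, hgh⟩ := hmero i
  refine ⟨fun w => h w - ∑ j ∈ Finset.univ.erase i, R j w, (hh.differentiableAt hV).sub
    (DifferentiableAt.fun_sum fun j hj => hR j _ (hz.ne (Finset.ne_of_mem_erase hj)).symm), ?_⟩
  filter_upwards [inter_mem_nhdsWithin _ hV] with w ⟨hwz, hwV⟩
  rw [hgh w ⟨hwV, hwz⟩, ← Finset.add_sum_erase _ _ (Finset.mem_univ i)]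
  ring

theorem stmt5_general (U : Set ℂ) (hUopen : IsOpen U) (hUsc : SimplyConnectedSpace U)
    (γ γ' : ℝ → ℂ) (hγ : PiecewiseC1 γ γ') (hclosed : γ 0 = γ 1)
    (himage : γ '' Set.Icc 0 1 ⊆ U)
    (l : ℕ) (z : Fin l → ℂ) (hz : Function.Injective z)
    (havoid : ∀ i, z i ∉ γ '' Set.Icc 0 1)
    (k : Fin l → ℕ) (α : Fin l → ℕ → ℂ)
    (R : Fin l → ℂ → ℂ)
    (hR : ∀ i w, R i w = ∑ j ∈ Finset.Icc 1 (k i), α i j / (w - z i) ^ j)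
    (g : ℂ → ℂ) (hg : DifferentiableOn ℂ g (U \ Set.range z))
    (hmero : ∀ i, ∃ V ∈ nhds (z i), ∃ h : ℂ → ℂ, DifferentiableOn ℂ h V ∧
      ∀ w ∈ V \ {z i}, h w = g w - R i w)
    (t : ℂ) (htU : t ∈ U) (ht : t ∉ γ '' Set.Icc 0 1) (ht' : ∀ i, t ≠ z i) :
    cauchyTypeIntegral γ γ' g t =
      windingNumber γ γ' t * g t - ∑ i, windingNumber γ γ' (z i) * R i t := by
  have hRfun : ∀ i, R i = fun w => ∑ j ∈ Finset.Icc 1 (k i), α i j / (w - z i) ^ j :=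
    fun i => funext (hR i)
  have hRdiff : ∀ i, ∀ w ≠ z i, DifferentiableAt ℂ (R i) w := fun i w hw => by
    rw [hRfun i]
    exact DifferentiableAt.fun_sum fun j _ => (differentiableAt_const _).div
      ((differentiableAt_id.sub_const _).pow _) (pow_ne_zero _ (sub_ne_zero.2 hw))
  obtain ⟨G, hG, hGeq⟩ := exists_differentiableOn_eqOn_sub_sum hUopen hz hRdiff hg hmero
  have hγz : ∀ w ∈ γ '' Icc 0 1, w ∉ range z := fun w hw ⟨i, hi⟩ => havoid i (hi ▸ hw)
  have hRcont : ∀ i, ContinuousOn (R i) (γ '' Icc 0 1) := fun i w hw =>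
    (hRdiff i w fun h => havoid i (h ▸ hw)).continuousAt.continuousWithinAt
  calc cauchyTypeIntegral γ γ' g t
      = cauchyTypeIntegral γ γ' (fun w => G w + ∑ i, R i w) t :=
        cauchyTypeIntegral_congr (fun w hw => by simp [hGeq (hγz w hw)]) t
    _ = windingNumber γ γ' t * G t +
          ∑ i, (windingNumber γ γ' t - windingNumber γ γ' (z i)) * R i t := by
        rw [hγ.cauchyTypeIntegral_add ht (hG.continuousOn.mono himage)
            (continuousOn_finsetSum _ fun i _ => hRcont i),
          hγ.cauchyTypeIntegral_finsetSum ht _ fun i _ => hRcont i,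
          hγ.cauchyTypeIntegral_eq_windingNumber_mul hUopen hclosed himage hG htU ht]
        congr 1
        refine Finset.sum_congr rfl fun i _ => ?_
        rw [hRfun i]
        exact hγ.cauchyTypeIntegral_principalPart hclosed (havoid i) ht (ht' i) _ _
    _ = windingNumber γ γ' t * g t - ∑ i, windingNumber γ γ' (z i) * R i t := by
        rw [hGeq fun ⟨i, hi⟩ => ht' i hi.symm]
        simp only [sub_mul, Finset.sum_sub_distrib, ← Finset.mul_sum]
        ring

theorem stmt5 (U : Set ℂ) (hUopen : IsOpen U) (hUsc : SimplyConnectedSpace U)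
    (γ γ' : ℝ → ℂ) (hγ : PiecewiseC1 γ γ') (hclosed : γ 0 = γ 1)
    (himage : γ '' Set.Icc 0 1 ⊆ U)
    (l : ℕ) (z : Fin l → ℂ) (hz : Function.Injective z)
    (hzU : ∀ i, z i ∈ U) (havoid : ∀ i, z i ∉ γ '' Set.Icc 0 1)
    (k : Fin l → ℕ) (hk : ∀ i, 1 ≤ k i) (α : Fin l → ℕ → ℂ)
    (R : Fin l → ℂ → ℂ)
    (hR : ∀ i w, R i w = ∑ j ∈ Finset.Icc 1 (k i), α i j / (w - z i) ^ j)
    (g : ℂ → ℂ) (hg : DifferentiableOn ℂ g (U \ Set.range z))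
    (hmero : ∀ i, ∃ V ∈ nhds (z i), ∃ h : ℂ → ℂ, DifferentiableOn ℂ h V ∧
      ∀ w ∈ V \ {z i}, h w = g w - R i w)
    (t : ℂ) (htU : t ∈ U) (ht : t ∉ γ '' Set.Icc 0 1) (ht' : ∀ i, t ≠ z i) :
    cauchyTypeIntegral γ γ' g t =
      windingNumber γ γ' t * g t - ∑ i, windingNumber γ γ' (z i) * R i t :=
  stmt5_general U hUopen hUsc γ γ' hγ hclosed himage l z hz havoid k α R hR g hg hmero t htU ht ht'
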